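/- arXiv:2410.20830 — 4 statements merged into one kernel-verified Lean document; each statement's English description precedes it below -/
import Mathlib

section
/- Let k ≥ 2 and let T be a k-uniform hypertree with m ≥ 1 edges (so T has n = m(k−1)+1 vertices), and let ρ be the unique eigenvalue of the adjacency tensor 𝒜(T) admitting a strictly positive eigenvector. Then the number of eigenvectors of 𝒜(T) associated with ρ, counted up to multiplication by nonzero complex scalars, is exactly k^{m(k−2)}; that is, |𝕍_ρ(𝒜(T))| = k^{m(k−2)}. -/
/-!
Let `y` be the positive eigenvector and `x` any eigenvector for `ρ`. Where the maximum `t` of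
`‖x v‖ / y v` is attained, the eigenvalue equation squeezes every term of `𝒜x^{k-1}`, so the
maximum is attained along each edge through that vertex; by connectivity `‖x‖ = t y`. Equality
in the triangle inequality then forces the phases `τ = x / (t y)` to satisfy
`∏_{u ∈ e∖v} τ u = (τ v)^{k-1}`, so `∏_{u ∈ e} τ u = (τ v)^k` for every `v ∈ e`: `τ^k` is
constant, and after normalising at a root `v₀` we get `x = c • σ y` with `σ` a vertex labelling
by `k`-th roots of unity whose product over every edge is `1`; conversely every such `σ y` is an
eigenvector. These `σ` with `σ v₀ = 1` form the kernel of `σ ↦ (σ v₀, (∏_{u ∈ e j} σ u)_j)`,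
a homomorphism `μ_k^n → μ_k^{1+m}` which is onto because each edge has a vertex not seen by the
earlier ones. Hence there are `k^{n-m-1} = k^{m(k-2)}` classes.
-/

open Finset

/-- `(𝒜(H) x^{k-1})_v = ∑_{e ∈ E(H), v ∈ e} ∏_{u ∈ e∖{v}} x_u` for a hypergraph with
edge set `E` on vertex set `Fin n`. -/
noncomputable def adjApply {n : ℕ} (E : Finset (Finset (Fin n))) (x : Fin n → ℂ)
    (v : Fin n) : ℂ :=
  ∑ e ∈ E.filter (fun e => v ∈ e), ∏ u ∈ e.erase v, x u

theorem Finset.eq_of_prod_eq_prod_of_le {ι : Type*} {s : Finset ι} {f g : ι → ℝ}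
    (hf : ∀ i ∈ s, 0 ≤ f i) (hfg : ∀ i ∈ s, f i ≤ g i) (hg : ∀ i ∈ s, 0 < g i)
    (h : ∏ i ∈ s, f i = ∏ i ∈ s, g i) : ∀ i ∈ s, f i = g i := by
  have hf_pos : ∀ i ∈ s, 0 < f i := fun i hi => (hf i hi).lt_of_ne' fun hfi =>
    (prod_pos hg).ne' (h ▸ prod_eq_zero hi hfi)
  by_contra! hne
  obtain ⟨i, hi, hne⟩ := hne
  exact (prod_lt_prod hf_pos hfg ⟨i, hi, (hfg i hi).lt_of_ne hne⟩).ne h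

open scoped ComplexOrder in
theorem Complex.eq_one_of_sum_mul_eq_sum {ι : Type*} {s : Finset ι} {w : ι → ℝ} {z : ι → ℂ}
    (hw : ∀ i ∈ s, 0 < w i) (hz : ∀ i ∈ s, ‖z i‖ ≤ 1)
    (h : ∑ i ∈ s, (w i : ℂ) * z i = ∑ i ∈ s, (w i : ℂ)) : ∀ i ∈ s, z i = 1 := by
  have hle : ∀ i ∈ s, w i * (z i).re ≤ w i := fun i hi =>
    mul_le_of_le_one_right (hw i hi).le ((re_le_norm _).trans (hz i hi))
  have hre : ∑ i ∈ s, w i * (z i).re = ∑ i ∈ s, w i := by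
    simpa [re_sum] using congrArg re h
  intro i hi
  have hre_one : (z i).re = 1 :=
    (mul_eq_left₀ (hw i hi).ne').1 ((sum_eq_sum_iff_of_le hle).1 hre i hi)
  have hnonneg : 0 ≤ z i :=
    re_eq_norm.1 (le_antisymm (re_le_norm _) (hre_one ▸ hz i hi))
  exact ext hre_one (nonneg_iff.1 hnonneg).2.symm

theorem MonoidHom.card_ker_mul_card_of_surjective {A B : Type*} [Group A] [Group B]
    {f : A →* B} (hf : Function.Surjective f) : Nat.card f.ker * Nat.card B = Nat.card A := by
  rw [← Subgroup.card_top (G := B), ← f.range_eq_top_of_surjective hf, ← Subgroup.index_ker,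
    Subgroup.card_mul_index]

theorem equivalence_exists_smul {K M : Type*} [GroupWithZero K] [MulAction K M]
    (p : M → Prop) : Equivalence fun x z : Subtype p => ∃ c : K, c ≠ 0 ∧ z.1 = c • x.1 where
  refl x := ⟨1, one_ne_zero, (one_smul K x.1).symm⟩
  symm := fun ⟨c, hc, h⟩ => ⟨c⁻¹, inv_ne_zero hc, by rw [h, inv_smul_smul₀ hc]⟩
  trans := fun ⟨c, hc, h⟩ ⟨d, hd, h'⟩ => ⟨d * c, mul_ne_zero hd hc, by rw [h', h, mul_smul]⟩

section AdjApplyFamily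

variable {ι V R : Type*} [Fintype ι] [DecidableEq V]

def adjApplyFamily [CommSemiring R] (e : ι → Finset V) (x : V → R) (v : V) : R :=
  ∑ j ∈ univ.filter (fun j => v ∈ e j), ∏ u ∈ (e j).erase v, x u

theorem adjApply_image_eq_adjApplyFamily {m n : ℕ} {e : Fin m → Finset (Fin n)}
    (he : Function.Injective e) (x : Fin n → ℂ) (v : Fin n) :
    adjApply (univ.image e) x v = adjApplyFamily e x v := by
  rw [adjApply, filter_image, sum_image fun _ _ _ _ h => he h]
  rfl

theorem adjApplyFamily_ofReal (e : ι → Finset V) (x : V → ℝ) (v : V) :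
    adjApplyFamily e (fun u => (x u : ℂ)) v = adjApplyFamily e x v := by
  simp [adjApplyFamily]

theorem adjApplyFamily_smul [CommSemiring R] {e : ι → Finset V} {k : ℕ}
    (hcard : ∀ j, (e j).card = k) (c : R) (x : V → R) (v : V) :
    adjApplyFamily e (c • x) v = c ^ (k - 1) * adjApplyFamily e x v := by
  rw [adjApplyFamily, adjApplyFamily, mul_sum]
  refine sum_congr rfl fun j hj => ?_
  simp only [Pi.smul_apply, smul_eq_mul, prod_mul_distrib, prod_const,
    card_erase_of_mem (mem_filter.1 hj).2, hcard]

theorem adjApplyFamily_mul_of_pow_eq_one [CommSemiring R] {e : ι → Finset V} {k : ℕ}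
    (hk : 0 < k) {σ : V → R} (hσ : ∀ v, σ v ^ k = 1) (he : ∀ j, ∏ u ∈ e j, σ u = 1)
    (x : V → R) (v : V) :
    adjApplyFamily e (σ * x) v = σ v ^ (k - 1) * adjApplyFamily e x v := by
  have herase : ∀ j, v ∈ e j → ∏ u ∈ (e j).erase v, σ u = σ v ^ (k - 1) := fun j hv =>
    calc ∏ u ∈ (e j).erase v, σ u
        = (∏ u ∈ (e j).erase v, σ u) * (σ v * σ v ^ (k - 1)) := by
          rw [← pow_succ', Nat.sub_add_cancel hk, hσ, mul_one]
      _ = σ v ^ (k - 1) := by rw [← mul_assoc, prod_erase_mul _ _ hv, he, one_mul]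
  rw [adjApplyFamily, adjApplyFamily, mul_sum]
  refine sum_congr rfl fun j hj => ?_
  rw [Pi.mul_def, prod_mul_distrib, herase j (mem_filter.1 hj).2]

theorem norm_adjApplyFamily_le (e : ι → Finset V) (x : V → ℂ) (v : V) :
    ‖adjApplyFamily e x v‖ ≤ adjApplyFamily e (fun u => ‖x u‖) v :=
  (norm_sum_le _ _).trans_eq (sum_congr rfl fun _ _ => norm_prod _ _)

theorem adjApplyFamily_mono {e : ι → Finset V} {f g : V → ℝ} (hf : 0 ≤ f) (hfg : f ≤ g)
    (v : V) : adjApplyFamily e f v ≤ adjApplyFamily e g v :=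
  sum_le_sum fun _ _ => prod_le_prod (fun u _ => hf u) fun u _ => hfg u

end AdjApplyFamily

/-- Connectedness of the hypergraph with edges `e j`, phrased as: a vertex property that
passes along every edge holds everywhere as soon as it holds somewhere. -/
def IsEdgeConnected {ι V : Type*} (e : ι → Finset V) : Prop :=
  ∀ P : V → Prop, (∀ j, ∀ u ∈ e j, ∀ v ∈ e j, P u → P v) → ∀ u v, P u → P v

theorem isEdgeConnected_of_meets_earlier {m : ℕ} {V : Type*} {e : Fin m → Finset V}
    (hcover : ∀ v, ∃ j, v ∈ e j)
    (hmeet : ∀ j : Fin m, 0 < (j : ℕ) → ∃ i < j, ∃ w ∈ e i, w ∈ e j) :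
    IsEdgeConnected e := by
  intro P hP u v hu
  let Full (j : Fin m) : Prop := ∀ w ∈ e j, P w
  have hpass : ∀ i j, ∀ w ∈ e i, w ∈ e j → Full i → Full j := fun i j w hwi hwj hi z hz =>
    hP j w hwj z hz (hi w hwi)
  obtain ⟨ju, hju⟩ := hcover u
  let j₀ : Fin m := ⟨0, ju.pos⟩
  have hfull : ∀ j, Full j ↔ Full j₀ := by
    intro j
    induction j using WellFoundedLT.induction with
    | _ j ih =>
      rcases Nat.eq_zero_or_pos j with hj | hj
      · rw [show j = j₀ from Fin.ext hj]
      · obtain ⟨i, hij, w, hwi, hwj⟩ := hmeet j hj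
        rw [← ih i hij]
        exact ⟨hpass j i w hwj hwi, hpass i j w hwi hwj⟩
  obtain ⟨jv, hjv⟩ := hcover v
  exact (hfull jv).2 ((hfull ju).1 (fun w hw => hP ju u hju w hw hu)) v hjv

section Hypertree

variable {m : ℕ} {V : Type*} [DecidableEq V] {e : Fin m → Finset V}

theorem exists_lt_mem_of_card_inter_biUnion_eq_one {j : Fin m}
    (h : (e j ∩ (univ.filter fun i => i < j).biUnion e).card = 1) :
    ∃ i < j, ∃ w ∈ e i, w ∈ e j := by
  obtain ⟨w, hw⟩ := card_pos.1 (h ▸ one_pos)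
  simp only [mem_inter, mem_biUnion, mem_filter, mem_univ, true_and] at hw
  obtain ⟨hwj, i, hij, hwi⟩ := hw
  exact ⟨i, hij, w, hwi, hwj⟩

theorem exists_mem_ne_forall_lt_notMem [NeZero m] (hcard : ∀ j, 2 ≤ (e j).card)
    (htree : ∀ j : Fin m, 0 < (j : ℕ) →
      ((e j) ∩ (univ.filter (fun i => i < j)).biUnion e).card = 1)
    {v₀ : V} (hv₀ : v₀ ∈ e 0) (j : Fin m) : ∃ p ∈ e j, p ≠ v₀ ∧ ∀ i < j, p ∉ e i := by
  rcases Nat.eq_zero_or_pos j with hj | hj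
  · obtain rfl : j = 0 := Fin.ext hj
    obtain ⟨p, hp⟩ := card_pos.1 (by rw [card_erase_of_mem hv₀]; have := hcard 0; omega :
      0 < ((e 0).erase v₀).card)
    exact ⟨p, mem_of_mem_erase hp, ne_of_mem_erase hp,
      fun i hi => absurd hi (Fin.not_lt_zero i)⟩
  · set W := (univ.filter fun i => i < j).biUnion e
    have hsplit := card_sdiff_add_card_inter (e j) W
    have hinter : (e j ∩ W).card = 1 := htree j hj
    obtain ⟨p, hp⟩ := card_pos.1 (by have := hcard j; omega : 0 < (e j \ W).card)
    obtain ⟨hpj, hpW⟩ := mem_sdiff.1 hp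
    have hv₀W : v₀ ∈ W :=
      mem_biUnion.2 ⟨0, mem_filter.2 ⟨mem_univ _, Fin.lt_def.2 (by rwa [Fin.val_zero])⟩, hv₀⟩
    refine ⟨p, hpj, fun h => hpW (h ▸ hv₀W), fun i hi hpi => hpW ?_⟩
    exact mem_biUnion.2 ⟨i, mem_filter.2 ⟨mem_univ _, hi⟩, hpi⟩

end Hypertree

section Eigenvectors

variable {ι V : Type*} [Fintype ι] [DecidableEq V] {e : ι → Finset V} {k : ℕ}
  {ρ : ℝ} {y : V → ℝ}

theorem exists_norm_eq_mul_of_eigen [Finite V] (hconn : IsEdgeConnected e)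
    (hcard : ∀ j, (e j).card = k) (hy : ∀ v, 0 < y v)
    (hρ : ∀ v, adjApplyFamily e y v = ρ * y v ^ (k - 1)) {x : V → ℂ}
    (hx0 : x ≠ 0) (hx : ∀ v, adjApplyFamily e x v = ρ * x v ^ (k - 1)) :
    ∃ t > 0, ∀ v, ‖x v‖ = t * y v := by
  obtain ⟨w, hw⟩ := Function.ne_iff.1 hx0
  have : Nonempty V := ⟨w⟩
  have hρ0 : 0 ≤ ρ := by
    refine nonneg_of_mul_nonneg_left ?_ (pow_pos (hy w) (k - 1))
    rw [← hρ]
    exact sum_nonneg fun j _ => prod_nonneg fun u _ => (hy u).le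
  obtain ⟨v₁, hv₁⟩ := Finite.exists_max fun v => ‖x v‖ / y v
  set t := ‖x v₁‖ / y v₁
  have hle : ∀ v, ‖x v‖ ≤ t * y v := fun v => (div_le_iff₀ (hy v)).1 (hv₁ v)
  have ht : 0 < t := pos_of_mul_pos_left ((norm_pos_iff.2 hw).trans_le (hle w)) (hy w).le
  refine ⟨t, ht, fun v => hconn (fun v => ‖x v‖ = t * y v) ?_ v₁ v
    (div_mul_cancel₀ _ (hy v₁).ne').symm⟩
  intro j u hu v hv hPu
  have hsq : adjApplyFamily e (fun u => ‖x u‖) u = adjApplyFamily e (t • y) u := by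
    refine le_antisymm (adjApplyFamily_mono (fun _ => norm_nonneg _) hle u) ?_
    calc adjApplyFamily e (t • y) u = ρ * (t * y u) ^ (k - 1) := by
          rw [adjApplyFamily_smul hcard, hρ]; ring
      _ = ‖adjApplyFamily e x u‖ := by
          rw [hx, norm_mul, norm_pow, hPu, Complex.norm_real, Real.norm_of_nonneg hρ0]
      _ ≤ adjApplyFamily e (fun u => ‖x u‖) u := norm_adjApplyFamily_le e x u
  have hterm := (sum_eq_sum_iff_of_le fun i _ => prod_le_prod (fun u _ => norm_nonneg (x u))
    fun u _ => hle u).1 hsq j (mem_filter.2 ⟨mem_univ j, hu⟩)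
  rcases eq_or_ne v u with rfl | hvu
  · exact hPu
  exact eq_of_prod_eq_prod_of_le (fun _ _ => norm_nonneg _) (fun u _ => hle u)
    (fun u _ => mul_pos ht (hy u)) hterm v (mem_erase.2 ⟨hvu, hv⟩)

theorem prod_erase_eq_pow_of_norm_eq_one (hy : ∀ v, 0 < y v)
    (hρ : ∀ v, adjApplyFamily e y v = ρ * y v ^ (k - 1)) {τ : V → ℂ} (hτ : ∀ v, ‖τ v‖ = 1)
    (hτy : ∀ v, adjApplyFamily e (fun u => τ u * y u) v = ρ * (τ v * y v) ^ (k - 1))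
    {j : ι} {v : V} (hv : v ∈ e j) : ∏ u ∈ (e j).erase v, τ u = τ v ^ (k - 1) := by
  have ha : τ v ^ (k - 1) ≠ 0 :=
    pow_ne_zero _ (norm_ne_zero_iff.1 (by rw [hτ]; exact one_ne_zero))
  have hsum : ∑ i ∈ univ.filter (fun i => v ∈ e i), ((∏ u ∈ (e i).erase v, y u : ℝ) : ℂ) *
      ((∏ u ∈ (e i).erase v, τ u) / τ v ^ (k - 1)) =
      ∑ i ∈ univ.filter (fun i => v ∈ e i), ((∏ u ∈ (e i).erase v, y u : ℝ) : ℂ) := by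
    calc _ = adjApplyFamily e (fun u => τ u * y u) v / τ v ^ (k - 1) := by
          simp only [adjApplyFamily, sum_div, prod_mul_distrib, Complex.ofReal_prod]
          exact sum_congr rfl fun _ _ => by ring
      _ = ((adjApplyFamily e y v : ℝ) : ℂ) := by
          rw [hτy, hρ, div_eq_iff ha]; push_cast; ring
      _ = _ := by simp only [adjApplyFamily, Complex.ofReal_sum]
  refine (div_eq_one_iff_eq ha).1 (Complex.eq_one_of_sum_mul_eq_sum
    (fun i _ => prod_pos fun u _ => hy u) (fun i _ => ?_) hsum j
    (mem_filter.2 ⟨mem_univ j, hv⟩))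
  simp [norm_prod, hτ]

theorem exists_eq_smul_phase_mul [Finite V] (hconn : IsEdgeConnected e) (hk : 0 < k)
    (hcard : ∀ j, (e j).card = k) (hy : ∀ v, 0 < y v)
    (hρ : ∀ v, adjApplyFamily e y v = ρ * y v ^ (k - 1)) (v₀ : V) {x : V → ℂ}
    (hx0 : x ≠ 0) (hx : ∀ v, adjApplyFamily e x v = ρ * x v ^ (k - 1)) :
    ∃ c : ℂ, c ≠ 0 ∧ ∃ σ : V → ℂ, (∀ v, σ v ^ k = 1) ∧ (∀ j, ∏ u ∈ e j, σ u = 1) ∧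
      σ v₀ = 1 ∧ x = c • fun v => σ v * y v := by
  obtain ⟨t, ht, hnorm⟩ := exists_norm_eq_mul_of_eigen hconn hcard hy hρ hx0 hx
  have hty : ∀ v, ((t * y v : ℝ) : ℂ) ≠ 0 := fun v =>
    Complex.ofReal_ne_zero.2 (mul_pos ht (hy v)).ne'
  set τ : V → ℂ := fun v => x v / (t * y v : ℝ)
  have hxτ : x = (t : ℂ) • fun v => τ v * y v := by
    funext v
    simp only [τ, Pi.smul_apply, smul_eq_mul]
    rw [div_mul_eq_mul_div, mul_div_assoc', eq_div_iff (hty v), Complex.ofReal_mul]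
    ring
  have hτ : ∀ v, ‖τ v‖ = 1 := fun v => by
    rw [norm_div, hnorm, Complex.norm_real, Real.norm_of_nonneg (mul_pos ht (hy v)).le,
      div_self (mul_pos ht (hy v)).ne']
  have hτ0 : ∀ v, τ v ≠ 0 := fun v => norm_ne_zero_iff.1 (by rw [hτ]; exact one_ne_zero)
  have hτy : ∀ v, adjApplyFamily e (fun u => τ u * y u) v = ρ * (τ v * y v) ^ (k - 1) := by
    intro v
    refine mul_left_cancel₀ (pow_ne_zero (k - 1) (Complex.ofReal_ne_zero.2 ht.ne')) ?_
    rw [← adjApplyFamily_smul hcard, ← hxτ, hx, hxτ]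
    simp only [Pi.smul_apply, smul_eq_mul]
    ring
  have hedge : ∀ j, ∀ v ∈ e j, ∏ u ∈ e j, τ u = τ v ^ k := fun j v hv => by
    rw [← mul_prod_erase _ _ hv, prod_erase_eq_pow_of_norm_eq_one hy hρ hτ hτy hv, ← pow_succ',
      Nat.sub_add_cancel hk]
  have hconst : ∀ v, τ v ^ k = τ v₀ ^ k := fun v =>
    hconn (fun v => τ v ^ k = τ v₀ ^ k)
      (fun j u hu v hv h => by rw [← hedge j v hv, hedge j u hu, h]) v₀ v rfl
  have hpow0 : τ v₀ ^ k ≠ 0 := pow_ne_zero k (hτ0 v₀)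
  refine ⟨t * τ v₀, mul_ne_zero (Complex.ofReal_ne_zero.2 ht.ne') (hτ0 v₀),
    fun v => τ v / τ v₀, fun v => by rw [div_pow, hconst, div_self hpow0], fun j => ?_,
    div_self (hτ0 v₀), ?_⟩
  · obtain ⟨v, hv⟩ := card_pos.1 ((hcard j).symm ▸ hk)
    rw [prod_div_distrib, prod_const, hcard, hedge j v hv, hconst, div_self hpow0]
  · funext v
    rw [hxτ]
    simp only [Pi.smul_apply, smul_eq_mul]
    field_simp [hτ0 v₀]

theorem adjApplyFamily_phase_mul_eq (hk : 0 < k)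
    (hρ : ∀ v, adjApplyFamily e y v = ρ * y v ^ (k - 1)) {σ : V → ℂ} (hσ : ∀ v, σ v ^ k = 1)
    (he : ∀ j, ∏ u ∈ e j, σ u = 1) (v : V) :
    adjApplyFamily e (fun u => σ u * y u) v = ρ * (σ v * y v) ^ (k - 1) := by
  rw [← Pi.mul_def, adjApplyFamily_mul_of_pow_eq_one hk hσ he,
    adjApplyFamily_ofReal, hρ]
  push_cast
  ring

end Eigenvectors

section Counting

variable {ι V G : Type*} [CommGroup G]

variable (G) in
def evalEdgeProdHom (e : ι → Finset V) (v₀ : V) : (V → G) →* G × (ι → G) where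
  toFun σ := (σ v₀, fun j => ∏ u ∈ e j, σ u)
  map_one' := by simp only [Pi.one_apply, prod_const_one]; rfl
  map_mul' σ τ := by
    ext j
    · rfl
    · exact prod_mul_distrib

theorem evalEdgeProdHom_apply (e : ι → Finset V) (v₀ : V) (σ : V → G) :
    evalEdgeProdHom G e v₀ σ = (σ v₀, fun j => ∏ u ∈ e j, σ u) := rfl

theorem evalEdgeProdHom_surjective [DecidableEq V] {m : ℕ} {e : Fin m → Finset V} {v₀ : V}
    (hnew : ∀ j, ∃ p ∈ e j, p ≠ v₀ ∧ ∀ i < j, p ∉ e i) :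
    Function.Surjective (evalEdgeProdHom G e v₀) := by
  rintro ⟨a, b⟩
  -- solve the edge equations one at a time, each by adjusting `σ` at a vertex unseen so far
  suffices h : ∀ N ≤ m, ∃ σ : V → G, σ v₀ = a ∧
      ∀ i : Fin m, (i : ℕ) < N → ∏ u ∈ e i, σ u = b i by
    obtain ⟨σ, hσ₀, hσ⟩ := h m le_rfl
    exact ⟨σ, Prod.ext hσ₀ (funext fun i => hσ i i.isLt)⟩
  intro N hN
  induction N with
  | zero => exact ⟨fun _ => a, rfl, fun i hi => absurd hi (Nat.not_lt_zero _)⟩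
  | succ N ih =>
    obtain ⟨σ, hσ₀, hσ⟩ := ih (Nat.le_of_succ_le hN)
    set j : Fin m := ⟨N, hN⟩
    obtain ⟨p, hpj, hpv₀, hp⟩ := hnew j
    refine ⟨σ * Pi.mulSingle p (b j * (∏ u ∈ e j, σ u)⁻¹), ?_, fun i hi => ?_⟩
    · rw [Pi.mul_apply, Pi.mulSingle_eq_of_ne hpv₀.symm, mul_one, hσ₀]
    simp only [Pi.mul_apply]
    rw [prod_mul_distrib, prod_pi_mulSingle']
    rcases Nat.lt_succ_iff_lt_or_eq.1 hi with hi | hi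
    · rw [if_neg (hp i hi), mul_one, hσ i hi]
    · rw [show i = j from Fin.ext hi, if_pos hpj, mul_inv_cancel_comm_assoc]

theorem mem_ker_evalEdgeProdHom_iff {M : Type*} [CommMonoid M]
    {e : ι → Finset V} {v₀ : V} {φ : G →* M} (hφ : Function.Injective φ) {σ : V → G} :
    σ ∈ (evalEdgeProdHom G e v₀).ker ↔ φ (σ v₀) = 1 ∧ ∀ j, ∏ u ∈ e j, φ (σ u) = 1 := by
  simp only [MonoidHom.mem_ker, evalEdgeProdHom_apply, Prod.ext_iff, funext_iff, ← map_prod,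
    Prod.fst_one, Prod.snd_one, Pi.one_apply, hφ.eq_iff' (map_one φ)]

end Counting

section Classes

variable {ι V : Type*} [Fintype ι] [DecidableEq V] {e : ι → Finset V} {k : ℕ} {ρ : ℝ}
  {y : V → ℝ}

theorem card_eigenvector_classes_eq_card_ker [Finite V] [NeZero k]
    (hconn : IsEdgeConnected e) (hcard : ∀ j, (e j).card = k) (hy : ∀ v, 0 < y v)
    (hρ : ∀ v, adjApplyFamily e y v = ρ * y v ^ (k - 1)) (v₀ : V) :
    Nat.card (Quot fun (x z : {x : V → ℂ //
        x ≠ 0 ∧ ∀ v, adjApplyFamily e x v = ρ * x v ^ (k - 1)}) =>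
      ∃ c : ℂ, c ≠ 0 ∧ z.1 = c • x.1) =
      Nat.card (evalEdgeProdHom (rootsOfUnity k ℂ) e v₀).ker := by
  have hk : 0 < k := Nat.pos_of_neZero k
  let φ : rootsOfUnity k ℂ →* ℂ := (Units.coeHom ℂ).comp (rootsOfUnity k ℂ).subtype
  have hφ : Function.Injective φ := rootsOfUnity.coe_injective
  have hy0 : ∀ v, (y v : ℂ) ≠ 0 := fun v => Complex.ofReal_ne_zero.2 (hy v).ne'
  let F (σ : (evalEdgeProdHom (rootsOfUnity k ℂ) e v₀).ker) : Quot _ :=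
    Quot.mk (fun x z => ∃ c : ℂ, c ≠ 0 ∧ z.1 = c • x.1) (⟨fun v => φ (σ.1 v) * y v, by
      obtain ⟨hσ₀, hσ⟩ := (mem_ker_evalEdgeProdHom_iff hφ).1 σ.2
      exact ⟨Function.ne_iff.2 ⟨v₀, by simp [hσ₀, hy0]⟩, adjApplyFamily_phase_mul_eq hk hρ
        (fun v => (mem_rootsOfUnity' k _).1 (σ.1 v).2) hσ⟩⟩ : {x : V → ℂ //
          x ≠ 0 ∧ ∀ v, adjApplyFamily e x v = ρ * x v ^ (k - 1)})
  refine (Nat.card_congr (Equiv.ofBijective F ⟨fun σ τ hστ => ?_, fun q => ?_⟩)).symm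
  · obtain ⟨c, -, hc⟩ := (equivalence_exists_smul _).eqvGen_iff.1 (Quot.eqvGen_exact hστ)
    obtain ⟨hσ₀, -⟩ := (mem_ker_evalEdgeProdHom_iff hφ).1 σ.2
    obtain ⟨hτ₀, -⟩ := (mem_ker_evalEdgeProdHom_iff hφ).1 τ.2
    have hc₁ : c = 1 := by
      have h := congrFun hc v₀
      simp only [hσ₀, hτ₀, Pi.smul_apply, smul_eq_mul, one_mul] at h
      exact (mul_eq_right₀ (hy0 v₀)).1 h.symm
    refine Subtype.ext (funext fun v => hφ (mul_right_cancel₀ (hy0 v) ?_))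
    simpa [hc₁] using (congrFun hc v).symm
  · induction q using Quot.ind with
    | mk x =>
      obtain ⟨c, hc, σ, hσk, hσe, hσ₀, hx⟩ :=
        exists_eq_smul_phase_mul hconn hk hcard hy hρ v₀ x.2.1 x.2.2
      let s (v : V) : rootsOfUnity k ℂ := rootsOfUnity.mkOfPowEq (σ v) (hσk v)
      exact ⟨⟨s, (mem_ker_evalEdgeProdHom_iff hφ).2 ⟨hσ₀, hσe⟩⟩, Quot.sound ⟨c, hc, hx⟩⟩

end Classes

/-- for a `k`-uniform hypertree `T` with `m ≥ 1` edges (edges `e 0, …,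
e (m-1)`, every vertex covered, each later edge meeting the union of the earlier ones in
exactly one vertex) and Perron–Frobenius eigenvalue `ρ` of `𝒜(T)`, the number of
eigenvectors of `𝒜(T)` associated with `ρ`, up to nonzero complex scalars, is
`k^{m(k-2)}`. -/
theorem stmt7 (k m n : ℕ) (hk : 2 ≤ k) (hm : 1 ≤ m) (hn : n = m * (k - 1) + 1)
    (e : Fin m → Finset (Fin n))
    (hcard : ∀ j, (e j).card = k)
    (hinj : Function.Injective e)
    (hcover : ∀ v : Fin n, ∃ j, v ∈ e j)
    (htree : ∀ j : Fin m, 0 < (j : ℕ) →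
      ((e j) ∩ (univ.filter (fun i => i < j)).biUnion e).card = 1)
    (ρ : ℝ) (y : Fin n → ℝ) (hy : ∀ i, 0 < y i)
    (hρ : ∀ v, adjApply (univ.image e) (fun i => (y i : ℂ)) v =
      (ρ : ℂ) * (y v : ℂ) ^ (k - 1)) :
    Nat.card (Quot (fun
        (x z : {x : Fin n → ℂ //
          x ≠ 0 ∧ ∀ v, adjApply (univ.image e) x v = (ρ : ℂ) * x v ^ (k - 1)}) =>
      ∃ c : ℂ, c ≠ 0 ∧ z.1 = c • x.1)) = k ^ (m * (k - 2)) := by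
  have hadj : adjApply (univ.image e) = adjApplyFamily e :=
    funext fun x => funext fun v => adjApply_image_eq_adjApplyFamily hinj x v
  have hρ' : ∀ v, adjApplyFamily e y v = ρ * y v ^ (k - 1) := fun v => by
    exact_mod_cast (adjApplyFamily_ofReal e y v).symm.trans (hadj ▸ hρ v)
  have : NeZero m := ⟨by omega⟩
  have : NeZero k := ⟨by omega⟩
  obtain ⟨v₀, hv₀⟩ := card_pos.1 ((hcard 0).symm ▸ (by omega : 0 < k))
  have hconn : IsEdgeConnected e := isEdgeConnected_of_meets_earlier hcover fun j hj =>
    exists_lt_mem_of_card_inter_biUnion_eq_one (htree j hj)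
  have hcount := MonoidHom.card_ker_mul_card_of_surjective (evalEdgeProdHom_surjective
    (G := rootsOfUnity k ℂ) (exists_mem_ne_forall_lt_notMem (fun j => hcard j ▸ hk) htree hv₀))
  rw [Nat.card_prod, Nat.card_fun, Nat.card_fun, Complex.card_rootsOfUnity, Nat.card_fin,
    Nat.card_fin] at hcount
  rw [hadj, card_eigenvector_classes_eq_card_ker hconn hcard hy hρ' v₀]
  refine Nat.eq_of_mul_eq_mul_right (pow_pos (by omega : 0 < k) (m + 1)) ?_
  rw [← pow_succ'] at hcount
  rw [hcount, ← pow_add, hn, show k - 1 = k - 2 + 1 by omega]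
  ring
end

section
/- Let n > k ≥ 2 and let K_n^{[k]} be the complete k-uniform hypergraph on n vertices (whose edges are all k-element subsets of {1,…,n}). Then the binomial coefficient ρ = C(n−1,k−1) is an eigenvalue of the adjacency tensor 𝒜(K_n^{[k]}) with the all-ones vector as eigenvector, and every eigenvector of 𝒜(K_n^{[k]}) associated with ρ is a nonzero complex scalar multiple of the all-ones vector; that is, |𝕍_ρ(𝒜(K_n^{[k]}))| = 1. -/
open Finset

/-- The edge set of the complete `k`-uniform hypergraph on `Fin n`: all `k`-element
subsets. -/
def completeEdges (n k : ℕ) : Finset (Finset (Fin n)) :=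
  Finset.powersetCard k univ

/-!
Let `x` be an eigenvector for `ρ = C(n-1, k-1)` and let `‖x v‖` be maximal. The eigenvalue
equation at `v` writes `ρ x_v^{k-1}` as a sum of `ρ` products `∏_{u ∈ S} x_u`, one for each
`(k-1)`-subset `S` of the other vertices, each of modulus at most `‖x v‖^{k-1}`. Equality in the
triangle inequality (`ℂ` is strictly convex) forces these products to be all equal, of modulus
`‖x v‖^{k-1}`; since `0 < k - 1 < n - 1`, exchanging one vertex of `S` for another shows that `x`
is constant off `v`, with modulus `‖x v‖`. Hence every coordinate has maximal modulus, and comparing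
any two coordinates from a third vertex shows that `x` is constant.
-/

section NormSum

variable {ι E : Type*} {s t : Finset ι} {f : ι → E} {R : ℝ}

theorem norm_sum_le_card_mul [SeminormedAddCommGroup E] (hf : ∀ i ∈ s, ‖f i‖ ≤ R) :
    ‖∑ i ∈ s, f i‖ ≤ #s * R := by
  simpa using norm_sum_le_of_le s hf

theorem norm_sum_eq_card_mul_of_subset [SeminormedAddCommGroup E] [DecidableEq ι]
    (hf : ∀ i ∈ s, ‖f i‖ ≤ R) (hs : ‖∑ i ∈ s, f i‖ = #s * R) (ht : t ⊆ s) :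
    ‖∑ i ∈ t, f i‖ = #t * R := by
  refine le_antisymm (norm_sum_le_card_mul fun i hi => hf i (ht hi)) ?_
  have hcompl := norm_sum_le_card_mul (s := s \ t) fun i hi => hf i (sdiff_subset hi)
  have hcard : (#(s \ t) : ℝ) = #s - #t := by
    rw [card_sdiff_of_subset ht, Nat.cast_sub (card_le_card ht)]
  calc (#t : ℝ) * R = #s * R - #(s \ t) * R := by rw [hcard]; ring
    _ ≤ ‖∑ i ∈ s, f i‖ - ‖∑ i ∈ s \ t, f i‖ := by rw [hs]; linarith
    _ ≤ ‖∑ i ∈ t, f i‖ := by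
      rw [← sum_sdiff ht]
      linarith [norm_add_le (∑ i ∈ s \ t, f i) (∑ i ∈ t, f i)]

theorem norm_eq_of_norm_sum_eq_card_mul [SeminormedAddCommGroup E]
    (hf : ∀ i ∈ s, ‖f i‖ ≤ R) (hs : ‖∑ i ∈ s, f i‖ = #s * R) {i : ι} (hi : i ∈ s) :
    ‖f i‖ = R := by
  classical
  simpa using norm_sum_eq_card_mul_of_subset hf hs (singleton_subset_iff.mpr hi)

theorem eq_of_norm_sum_eq_card_mul [NormedAddCommGroup E] [NormedSpace ℝ E]
    [StrictConvexSpace ℝ E] (hf : ∀ i ∈ s, ‖f i‖ ≤ R) (hs : ‖∑ i ∈ s, f i‖ = #s * R)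
    {i j : ι} (hi : i ∈ s) (hj : j ∈ s) : f i = f j := by
  classical
  obtain rfl | hij := eq_or_ne i j
  · rfl
  have hpair :=
    norm_sum_eq_card_mul_of_subset hf hs (insert_subset hi (singleton_subset_iff.mpr hj))
  rw [sum_pair hij, card_pair hij] at hpair
  refine eq_of_norm_eq_of_norm_add_eq ?_ ?_
  · rw [norm_eq_of_norm_sum_eq_card_mul hf hs hi, norm_eq_of_norm_sum_eq_card_mul hf hs hj]
  · rw [hpair, norm_eq_of_norm_sum_eq_card_mul hf hs hi, norm_eq_of_norm_sum_eq_card_mul hf hs hj]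
    push_cast; ring

end NormSum

/-- Exchange `u` for `u'` in an `m`-subset of `T` containing `u` but not `u'`. -/
theorem eq_of_prod_powersetCard_eq {α M : Type*} [DecidableEq α] [CommMonoidWithZero M]
    [IsCancelMulZero M] {T : Finset α} {m : ℕ} (hm : 0 < m) (hmT : m < #T) {x : α → M}
    (hprod : ∀ S ∈ powersetCard m T, ∀ S' ∈ powersetCard m T, ∏ u ∈ S, x u = ∏ u ∈ S', x u)
    (hne : ∀ S ∈ powersetCard m T, ∏ u ∈ S, x u ≠ 0) {u u' : α} (hu : u ∈ T) (hu' : u' ∈ T) :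
    x u = x u' := by
  obtain rfl | huu' := eq_or_ne u u'
  · rfl
  obtain ⟨S, huS, hST, hS⟩ := exists_subsuperset_card_eq (s := {u}) (t := T.erase u') (n := m)
    (by simpa [huu'] using hu) (by simpa using hm.nat_succ_le)
    (by rw [card_erase_of_mem hu']; omega)
  have huS : u ∈ S := singleton_subset_iff.mp huS
  have hu'S : u' ∉ S.erase u := fun h => by simpa using hST (mem_of_mem_erase h)
  have hSmem : S ∈ powersetCard m T := mem_powersetCard.mpr ⟨hST.trans (erase_subset _ _), hS⟩
  have hS'mem : insert u' (S.erase u) ∈ powersetCard m T := by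
    refine mem_powersetCard.mpr ⟨insert_subset hu' ((erase_subset _ _).trans ?_), ?_⟩
    · exact hST.trans (erase_subset _ _)
    · rw [card_insert_of_notMem hu'S, card_erase_of_mem huS, hS]; omega
  have hswap := hprod _ hSmem _ hS'mem
  rw [← mul_prod_erase _ _ huS, prod_insert hu'S] at hswap
  have hrest : ∏ w ∈ S.erase u, x w ≠ 0 := by
    have := hne _ hSmem
    rw [← mul_prod_erase _ _ huS] at this
    exact right_ne_zero_of_mul this
  exact mul_right_cancel₀ hrest hswap

theorem adjApply_completeEdges {n k : ℕ} (hk : 1 ≤ k) (x : Fin n → ℂ) (v : Fin n) :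
    adjApply (completeEdges n k) x v =
      ∑ S ∈ powersetCard (k - 1) (univ.erase v), ∏ u ∈ S, x u := by
  refine sum_nbij' (fun e => e.erase v) (insert v) ?_ ?_ ?_ ?_ fun _ _ => rfl
  · intro e he
    simp only [completeEdges, mem_filter, mem_powersetCard] at he ⊢
    exact ⟨erase_subset_erase v (subset_univ e), by rw [card_erase_of_mem he.2, he.1.2]⟩
  · intro S hS
    have hv : v ∉ S := fun h => by simpa using mem_powersetCard.mp hS |>.1 h
    simp only [completeEdges, mem_filter, mem_powersetCard] at hS ⊢
    exact ⟨⟨subset_univ _, by rw [card_insert_of_notMem hv, hS.2]; omega⟩, mem_insert_self v S⟩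
  · intro e he
    exact insert_erase (mem_filter.mp he).2
  · intro S hS
    exact erase_insert fun h => by simpa using (mem_powersetCard.mp hS).1 h

section Eigenvector

variable {n k : ℕ} {x : Fin n → ℂ} {v : Fin n}

theorem norm_prod_le_pow_of_forall_norm_le {S : Finset (Fin n)} {M : ℝ} (hM : ∀ u, ‖x u‖ ≤ M) :
    ‖∏ u ∈ S, x u‖ ≤ M ^ #S := by
  rw [norm_prod, ← prod_const]
  exact prod_le_prod (fun _ _ => norm_nonneg _) fun u _ => hM u

theorem norm_sum_link_eq_card_mul (hk : 1 ≤ k)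
    (heig : ∀ v, adjApply (completeEdges n k) x v = ((n - 1).choose (k - 1) : ℂ) * x v ^ (k - 1)) :
    ‖∑ S ∈ powersetCard (k - 1) (univ.erase v), ∏ u ∈ S, x u‖ =
      #(powersetCard (k - 1) (univ.erase v)) * ‖x v‖ ^ (k - 1) := by
  rw [← adjApply_completeEdges hk, heig, norm_mul, norm_pow, Complex.norm_natCast]
  simp

/-- At a coordinate of maximal modulus the eigenvalue equation is an equality case of the
triangle inequality. -/
theorem prod_link_eq_of_isMax (hk : 1 ≤ k)
    (heig : ∀ v, adjApply (completeEdges n k) x v = ((n - 1).choose (k - 1) : ℂ) * x v ^ (k - 1))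
    (hmax : ∀ u, ‖x u‖ ≤ ‖x v‖) {S S' : Finset (Fin n)}
    (hS : S ∈ powersetCard (k - 1) (univ.erase v))
    (hS' : S' ∈ powersetCard (k - 1) (univ.erase v)) :
    ∏ u ∈ S, x u = ∏ u ∈ S', x u :=
  eq_of_norm_sum_eq_card_mul
    (fun _ hT => (mem_powersetCard.mp hT).2 ▸ norm_prod_le_pow_of_forall_norm_le hmax)
    (norm_sum_link_eq_card_mul hk heig) hS hS'

theorem norm_prod_link_of_isMax (hk : 1 ≤ k)
    (heig : ∀ v, adjApply (completeEdges n k) x v = ((n - 1).choose (k - 1) : ℂ) * x v ^ (k - 1))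
    (hmax : ∀ u, ‖x u‖ ≤ ‖x v‖) {S : Finset (Fin n)}
    (hS : S ∈ powersetCard (k - 1) (univ.erase v)) :
    ‖∏ u ∈ S, x u‖ = ‖x v‖ ^ (k - 1) :=
  norm_eq_of_norm_sum_eq_card_mul
    (fun _ hT => (mem_powersetCard.mp hT).2 ▸ norm_prod_le_pow_of_forall_norm_le hmax)
    (norm_sum_link_eq_card_mul hk heig) hS

theorem apply_eq_of_isMax (hk : 2 ≤ k) (hkn : k < n)
    (heig : ∀ v, adjApply (completeEdges n k) x v = ((n - 1).choose (k - 1) : ℂ) * x v ^ (k - 1))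
    (hmax : ∀ u, ‖x u‖ ≤ ‖x v‖) (hv : x v ≠ 0) {u u' : Fin n} (hu : u ≠ v) (hu' : u' ≠ v) :
    x u = x u' := by
  refine eq_of_prod_powersetCard_eq (T := univ.erase v) (m := k - 1) (by omega) ?_
    (fun _ hS _ hS' => prod_link_eq_of_isMax (by omega) heig hmax hS hS') (fun _ hS => ?_)
    (by simpa using hu) (by simpa using hu')
  · rw [card_erase_of_mem (mem_univ v), card_univ, Fintype.card_fin]; omega
  · rw [← norm_ne_zero_iff, norm_prod_link_of_isMax (by omega) heig hmax hS]
    exact pow_ne_zero _ (norm_ne_zero_iff.mpr hv)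

theorem norm_apply_eq_of_isMax (hk : 2 ≤ k) (hkn : k < n)
    (heig : ∀ v, adjApply (completeEdges n k) x v = ((n - 1).choose (k - 1) : ℂ) * x v ^ (k - 1))
    (hmax : ∀ u, ‖x u‖ ≤ ‖x v‖) (hv : x v ≠ 0) {u : Fin n} (hu : u ≠ v) :
    ‖x u‖ = ‖x v‖ := by
  obtain ⟨S, hS⟩ : (powersetCard (k - 1) (univ.erase v)).Nonempty := by
    rw [powersetCard_nonempty, card_erase_of_mem (mem_univ v), card_univ, Fintype.card_fin]
    omega
  have hprod : ∏ w ∈ S, x w = x u ^ (k - 1) := by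
    rw [← (mem_powersetCard.mp hS).2, ← prod_const]
    refine prod_congr rfl fun w hw => apply_eq_of_isMax hk hkn heig hmax hv ?_ hu
    simpa using (mem_powersetCard.mp hS).1 hw
  have hnorm := norm_prod_link_of_isMax (by omega) heig hmax hS
  rw [hprod, norm_pow] at hnorm
  exact (pow_left_inj₀ (norm_nonneg _) (norm_nonneg _) (by omega)).mp hnorm

end Eigenvector

theorem exists_eq_const_of_eigenvector {n k : ℕ} {x : Fin n → ℂ} (hk : 2 ≤ k) (hkn : k < n)
    (heig : ∀ v, adjApply (completeEdges n k) x v = ((n - 1).choose (k - 1) : ℂ) * x v ^ (k - 1))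
    (hx : x ≠ 0) : ∃ c : ℂ, c ≠ 0 ∧ x = fun _ => c := by
  have : Nonempty (Fin n) := ⟨⟨0, by omega⟩⟩
  obtain ⟨v, -, hvmax⟩ := exists_max_image univ (fun u => ‖x u‖) univ_nonempty
  have hmax (u : Fin n) : ‖x u‖ ≤ ‖x v‖ := hvmax u (mem_univ u)
  have hv : x v ≠ 0 := fun h => hx <| funext fun u => by simpa [h] using hmax u
  have hnorm (u : Fin n) : ‖x u‖ = ‖x v‖ := by
    obtain rfl | hu := eq_or_ne u v
    · rfl
    · exact norm_apply_eq_of_isMax hk hkn heig hmax hv hu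
  refine ⟨x v, hv, funext fun u => ?_⟩
  obtain ⟨w, hwu, hwv⟩ := Fin.exists_ne_and_ne_of_two_lt u v (by omega)
  exact apply_eq_of_isMax hk hkn heig (fun y => by rw [hnorm y, hnorm w])
    (norm_ne_zero_iff.mp (by rw [hnorm w]; exact norm_ne_zero_iff.mpr hv)) hwu.symm hwv.symm

theorem Quot.natCard_eq_one {α : Type*} [Nonempty α] {r : α → α → Prop} (hr : ∀ a b, r a b) :
    Nat.card (Quot r) = 1 :=
  Nat.card_eq_one_iff_unique.mpr
    ⟨⟨fun a b => Quot.induction_on₂ a b fun a b => Quot.sound (hr a b)⟩,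
      ⟨Quot.mk r (Classical.arbitrary α)⟩⟩

/-- for `n > k ≥ 2`, `ρ = C(n-1, k-1)` is an eigenvalue of
`𝒜(K_n^{[k]})` with the all-ones vector as eigenvector, and every eigenvector of
`𝒜(K_n^{[k]})` associated with `ρ` is a nonzero scalar multiple of the all-ones vector;
that is, `|𝕍_ρ(𝒜(K_n^{[k]}))| = 1`. -/
theorem stmt9 (n k : ℕ) (hk : 2 ≤ k) (hn : k < n) :
    ((fun _ => (1 : ℂ)) : Fin n → ℂ) ≠ 0 ∧
    (∀ v, adjApply (completeEdges n k) (fun _ => 1) v =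
      ((n - 1).choose (k - 1) : ℂ) * (1 : ℂ) ^ (k - 1)) ∧
    (∀ x : Fin n → ℂ, x ≠ 0 →
      (∀ v, adjApply (completeEdges n k) x v =
        ((n - 1).choose (k - 1) : ℂ) * x v ^ (k - 1)) →
      ∃ c : ℂ, c ≠ 0 ∧ x = fun _ => c) ∧
    Nat.card (Quot (fun
        (x z : {x : Fin n → ℂ //
          x ≠ 0 ∧ ∀ v, adjApply (completeEdges n k) x v =
            ((n - 1).choose (k - 1) : ℂ) * x v ^ (k - 1)}) =>
      ∃ c : ℂ, c ≠ 0 ∧ z.1 = c • x.1)) = 1 := by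
  have hone : ((fun _ => (1 : ℂ)) : Fin n → ℂ) ≠ 0 :=
    fun h => one_ne_zero (congrFun h ⟨0, by omega⟩)
  have heig_one (v : Fin n) : adjApply (completeEdges n k) (fun _ => 1) v =
      ((n - 1).choose (k - 1) : ℂ) * (1 : ℂ) ^ (k - 1) := by
    simp [adjApply_completeEdges (by omega : 1 ≤ k)]
  have hconst := fun x (hx : x ≠ 0) heig => exists_eq_const_of_eigenvector hk hn heig hx
  refine ⟨hone, heig_one, hconst, ?_⟩
  have : Nonempty {x : Fin n → ℂ // x ≠ 0 ∧ ∀ v, adjApply (completeEdges n k) x v =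
      ((n - 1).choose (k - 1) : ℂ) * x v ^ (k - 1)} := ⟨⟨_, hone, heig_one⟩⟩
  refine Quot.natCard_eq_one fun x z => ?_
  obtain ⟨c, hc, hxc⟩ := hconst x.1 x.2.1 x.2.2
  obtain ⟨d, hd, hzd⟩ := hconst z.1 z.2.1 z.2.2
  refine ⟨d / c, div_ne_zero hd hc, ?_⟩
  rw [hxc, hzd]
  funext
  simp [hc]
end

section
/- Let 𝒜 be a nonnegative weakly irreducible tensor of order k ≥ 2 and dimension n, let ρ be its unique eigenvalue admitting a strictly positive eigenvector (the Perron–Frobenius eigenvalue), and let λ be any eigenvalue of 𝒜 with |λ| = ρ. Then the projective eigenvarieties 𝕍_λ(𝒜) and 𝕍_ρ(𝒜) are finite and have the same cardinality: |𝕍_λ(𝒜)| = |𝕍_ρ(𝒜)|. -/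
/-!
If `x` is an eigenvector for `λ` with `|λ| = ρ`, the triangle inequality makes `|x|` a
nonnegative subeigenvector for `ρ`, and the maximum principle for `|x| / y` along the strongly
connected graph of `𝒜` forces `|x| = s y`. Equality in the triangle inequality then aligns
the phases: `x_i = s d_i y_i` with `d` unimodular and `∏_{t ≠ 0} d_{f t} = (λ / ρ) d_{f 0}^{k-1}`
along every hyperedge `f`. The diagonal similarity by such a `d` carries `ρ`-eigenvectors to
`λ`-eigenvectors, whence `𝕍_ρ(𝒜) ≃ 𝕍_λ(𝒜)`. Finally `𝕍_ρ(𝒜)` is covered by the phases of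
ratio `1` normalized at one coordinate; such a phase is determined by the integer windings
of its arguments along the hyperedges (again by the maximum principle), and these are
bounded by `k`.
-/

open Finset

/-- `(𝒜 x^{k-1})_i` for a tensor of order `k` and dimension `n` with entries `a`. -/
noncomputable def tApply {k n : ℕ} (hk : 0 < k) (a : (Fin k → Fin n) → ℂ)
    (x : Fin n → ℂ) (i : Fin n) : ℂ :=
  ∑ j : Fin k → Fin n,
    if j ⟨0, hk⟩ = i then a j * ∏ t ∈ univ.erase (⟨0, hk⟩ : Fin k), x (j t) else 0

/-- The arc relation of the directed graph `D(𝒜)`. -/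
def arcRel {k n : ℕ} (hk : 0 < k) (a : (Fin k → Fin n) → ℂ) (i j : Fin n) : Prop :=
  ∃ f : Fin k → Fin n, a f ≠ 0 ∧ f ⟨0, hk⟩ = i ∧ ∃ t : Fin k, t ≠ ⟨0, hk⟩ ∧ f t = j

/-- `𝒜` is weakly irreducible if `D(𝒜)` is strongly connected. -/
def WeaklyIrreducible {k n : ℕ} (hk : 0 < k) (a : (Fin k → Fin n) → ℂ) : Prop :=
  ∀ i j : Fin n, Relation.ReflTransGen (arcRel hk a) i j

theorem eq_of_max_propagates {α β : Type*} [Finite α] [LinearOrder β] {r : α → α → Prop}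
    (hr : ∀ i j, Relation.ReflTransGen r i j) (δ : α → β)
    (hδ : ∀ i j, (∀ l, δ l ≤ δ i) → r i j → δ j = δ i) (i j : α) : δ i = δ j := by
  have : Nonempty α := ⟨i⟩
  obtain ⟨m, hm⟩ := Finite.exists_max δ
  have hconst : ∀ l, δ l = δ m := fun l => by
    induction hr m l with
    | refl => rfl
    | tail _ hrel ih => exact (hδ _ _ (ih ▸ hm) hrel).trans ih
  rw [hconst i, hconst j]

theorem eq_of_prod_eq_of_le {ι : Type*} {s : Finset ι} {u v : ι → ℝ}
    (hu : ∀ t ∈ s, 0 ≤ u t) (huv : ∀ t ∈ s, u t ≤ v t) (hv : ∀ t ∈ s, 0 < v t)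
    (h : ∏ t ∈ s, u t = ∏ t ∈ s, v t) {t : ι} (ht : t ∈ s) : u t = v t := by
  by_contra hne
  have hlt : ∃ t ∈ s, u t < v t := ⟨t, ht, (huv t ht).lt_of_ne hne⟩
  by_cases hpos : ∀ t ∈ s, 0 < u t
  · exact (prod_lt_prod hpos huv hlt).ne h
  · simp only [not_forall, not_lt] at hpos
    obtain ⟨t', ht', hle⟩ := hpos
    rw [prod_eq_zero ht' (le_antisymm hle (hu t' ht'))] at h
    exact (prod_pos hv).ne h

theorem Complex.eq_norm_mul_of_sum_eq {ι : Type*} {s : Finset ι} {c : ι → ℂ} {w : ℂ}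
    (hw : ‖w‖ = 1) (h : ∑ j ∈ s, c j = (∑ j ∈ s, ‖c j‖ : ℝ) * w) {j : ι} (hj : j ∈ s) :
    c j = ‖c j‖ * w := by
  have hww : (starRingEnd ℂ) w * w = 1 := by
    rw [mul_comm, Complex.mul_conj, Complex.normSq_eq_norm_sq, hw]; norm_num
  have hnorm : ∀ j, ‖c j * (starRingEnd ℂ) w‖ = ‖c j‖ := fun j => by
    rw [norm_mul, Complex.norm_conj, hw, mul_one]
  -- after rotating by `w̄` all terms have real part at most their norm, and the sums agree
  have hre : ∑ j ∈ s, (c j * (starRingEnd ℂ) w).re = ∑ j ∈ s, ‖c j * (starRingEnd ℂ) w‖ := by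
    rw [← Complex.re_sum, ← sum_mul, h, mul_assoc, mul_comm w, hww, mul_one]
    simp only [hnorm, Complex.ofReal_re]
  have hj' := (sum_eq_sum_iff_of_le fun j _ => Complex.re_le_norm _).mp hre j hj
  have hpos := Complex.eq_coe_norm_of_nonneg (Complex.re_eq_norm.mp hj')
  rw [hnorm] at hpos
  calc c j = c j * (starRingEnd ℂ) w * w := by rw [mul_assoc, hww, mul_one]
    _ = ‖c j‖ * w := by rw [hpos]

theorem Complex.ne_zero_of_norm_eq_one {w : ℂ} (h : ‖w‖ = 1) : w ≠ 0 :=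
  ne_zero_of_norm_ne_zero (h ▸ one_ne_zero)

theorem Complex.div_ofReal_mul_of_norm_eq {μ : ℂ} {ρ : ℝ} (h : ‖μ‖ = ρ) : μ / ρ * ρ = μ := by
  rcases eq_or_ne μ 0 with rfl | hμ
  · simp
  · exact div_mul_cancel₀ _ (by rw [← h]; exact_mod_cast norm_ne_zero_iff.mpr hμ)

theorem Complex.inv_div_ofReal_mul_of_norm_eq {μ : ℂ} {ρ : ℝ} (h : ‖μ‖ = ρ) :
    (μ / ρ)⁻¹ * μ = ρ := by
  rcases eq_or_ne μ 0 with rfl | hμ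
  · simp [← h]
  · rw [inv_div, div_mul_cancel₀ _ hμ]

section Basic

variable {k n : ℕ} (hk : 0 < k)

theorem card_erase_zero : (univ.erase (⟨0, hk⟩ : Fin k)).card = k - 1 := by
  rw [card_erase_of_mem (mem_univ _), card_univ, Fintype.card_fin]

theorem tApply_eq_sum_filter (b : (Fin k → Fin n) → ℂ) (x : Fin n → ℂ) (i : Fin n) :
    tApply hk b x i = ∑ j ∈ univ.filter (fun j : Fin k → Fin n => j ⟨0, hk⟩ = i),
      b j * ∏ t ∈ univ.erase ⟨0, hk⟩, x (j t) := by
  rw [tApply, sum_filter]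

/-- With `D = diag d`, this says `D^{-(k-1)} 𝒜 D = c 𝒜` entrywise. -/
def IsPhase (b : (Fin k → Fin n) → ℂ) (c : ℂ) (d : Fin n → ℂ) : Prop :=
  ∀ f, b f ≠ 0 → ∏ t ∈ univ.erase ⟨0, hk⟩, d (f t) = c * d (f ⟨0, hk⟩) ^ (k - 1)

variable {hk} {b : (Fin k → Fin n) → ℂ} {c : ℂ} {d : Fin n → ℂ}

theorem IsPhase.smul (hd : IsPhase hk b c d) (e : ℂ) : IsPhase hk b c (e • d) := by
  intro f hf
  simp only [Pi.smul_apply, smul_eq_mul, prod_mul_distrib, prod_const, card_erase_zero, hd f hf]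
  ring

theorem IsPhase.inv (hd : IsPhase hk b c d) : IsPhase hk b c⁻¹ d⁻¹ := by
  intro f hf
  simp only [Pi.inv_apply, prod_inv_distrib, hd f hf, mul_inv, inv_pow]

theorem IsPhase.tApply_mul (hd : IsPhase hk b c d) (x : Fin n → ℂ) (i : Fin n) :
    tApply hk b (d * x) i = c * d i ^ (k - 1) * tApply hk b x i := by
  simp only [tApply_eq_sum_filter, mul_sum]
  refine sum_congr rfl fun f hf => ?_
  rw [mem_filter] at hf
  by_cases hbf : b f = 0
  · simp [hbf]
  · simp only [Pi.mul_apply, prod_mul_distrib, hd f hbf, hf.2]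
    ring

end Basic

section Eigenvarieties

variable {k n : ℕ} (hk : 0 < k)

abbrev TensorEigenvectors (b : (Fin k → Fin n) → ℂ) (μ : ℂ) : Type :=
  {x : Fin n → ℂ // x ≠ 0 ∧ ∀ i, tApply hk b x i = μ * x i ^ (k - 1)}

def ProjEigenvariety (b : (Fin k → Fin n) → ℂ) (μ : ℂ) : Type :=
  Quot fun x z : TensorEigenvectors hk b μ => ∃ c : ℂ, c ≠ 0 ∧ z.1 = c • x.1

variable {hk} {b : (Fin k → Fin n) → ℂ} {c : ℂ} {d : Fin n → ℂ}

theorem IsPhase.isEigenvector_mul (hd : IsPhase hk b c d) (hd0 : ∀ i, d i ≠ 0) {μ : ℂ}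
    (x : TensorEigenvectors hk b μ) :
    d * x.1 ≠ 0 ∧ ∀ i, tApply hk b (d * x.1) i = (c * μ) * (d * x.1) i ^ (k - 1) := by
  refine ⟨fun h => x.2.1 (funext fun i => ?_), fun i => ?_⟩
  · simpa [hd0 i] using congrFun h i
  · rw [hd.tApply_mul, x.2.2, Pi.mul_apply, mul_pow]
    ring

noncomputable def TensorEigenvectors.equivOfIsPhase (hd : IsPhase hk b c d) (hd0 : ∀ i, d i ≠ 0)
    {μ μ' : ℂ} (hμ' : μ' = c * μ) (hμ : μ = c⁻¹ * μ') :
    TensorEigenvectors hk b μ ≃ TensorEigenvectors hk b μ' where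
  toFun x := ⟨d * x.1, hμ' ▸ hd.isEigenvector_mul hd0 x⟩
  invFun x := ⟨d⁻¹ * x.1, hμ ▸ hd.inv.isEigenvector_mul (fun i => inv_ne_zero (hd0 i)) x⟩
  left_inv _ := Subtype.ext (funext fun i => inv_mul_cancel_left₀ (hd0 i) _)
  right_inv _ := Subtype.ext (funext fun i => mul_inv_cancel_left₀ (hd0 i) _)

noncomputable def ProjEigenvariety.equivOfIsPhase (hd : IsPhase hk b c d) (hd0 : ∀ i, d i ≠ 0)
    {μ μ' : ℂ} (hμ' : μ' = c * μ) (hμ : μ = c⁻¹ * μ') :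
    ProjEigenvariety hk b μ ≃ ProjEigenvariety hk b μ' :=
  Quot.congr (TensorEigenvectors.equivOfIsPhase hd hd0 hμ' hμ) fun x z => by
    have hinj : Function.Injective (d * ·) := fun u v h =>
      funext fun i => mul_left_cancel₀ (hd0 i) (congrFun h i)
    refine exists_congr fun e => and_congr_right fun _ => ?_
    change z.1 = e • x.1 ↔ d * z.1 = e • (d * x.1)
    rw [← mul_smul_comm]
    exact hinj.eq_iff.symm

end Eigenvarieties

theorem WeaklyIrreducible.eq_of_max_propagates {k n : ℕ} {hk : 0 < k}
    {b : (Fin k → Fin n) → ℂ} (hb : WeaklyIrreducible hk b) {β : Type*} [LinearOrder β]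
    (δ : Fin n → β) (hδ : ∀ f, b f ≠ 0 → (∀ l, δ l ≤ δ (f ⟨0, hk⟩)) →
      ∀ t ≠ ⟨0, hk⟩, δ (f t) = δ (f ⟨0, hk⟩)) (i j : Fin n) : δ i = δ j :=
  _root_.eq_of_max_propagates hb δ (by
    rintro _ _ hmax ⟨f, hf, rfl, t, ht, rfl⟩
    exact hδ f hf hmax t ht) i j

section Real

variable {k n : ℕ} (hk : 0 < k)

noncomputable def tApplyReal (a : (Fin k → Fin n) → ℝ) (u : Fin n → ℝ) (i : Fin n) : ℝ :=
  ∑ j ∈ univ.filter (fun j : Fin k → Fin n => j ⟨0, hk⟩ = i),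
    a j * ∏ t ∈ univ.erase ⟨0, hk⟩, u (j t)

variable {hk} {a : (Fin k → Fin n) → ℝ}

theorem tApply_ofReal (u : Fin n → ℝ) (i : Fin n) :
    tApply hk (fun j => (a j : ℂ)) (fun i => (u i : ℂ)) i = tApplyReal hk a u i := by
  simp only [tApply_eq_sum_filter, tApplyReal]
  push_cast
  rfl

theorem tApplyReal_smul (s : ℝ) (u : Fin n → ℝ) (i : Fin n) :
    tApplyReal hk a (s • u) i = s ^ (k - 1) * tApplyReal hk a u i := by
  simp only [tApplyReal, mul_sum, Pi.smul_apply, smul_eq_mul, prod_mul_distrib, prod_const,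
    card_erase_zero]
  exact sum_congr rfl fun _ _ => by ring

theorem norm_tApply_le (ha : ∀ j, 0 ≤ a j) (x : Fin n → ℂ) (i : Fin n) :
    ‖tApply hk (fun j => (a j : ℂ)) x i‖ ≤ tApplyReal hk a (‖x ·‖) i := by
  rw [tApply_eq_sum_filter, tApplyReal]
  refine (norm_sum_le _ _).trans_eq (sum_congr rfl fun j _ => ?_)
  rw [norm_mul, norm_prod, Complex.norm_real, Real.norm_of_nonneg (ha j)]

variable {ρ : ℝ} {y : Fin n → ℝ}

theorem pos_of_ne_zero_of_eigenvector (ha : ∀ j, 0 ≤ a j) (hy : ∀ i, 0 < y i)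
    (hρ : ∀ i, tApplyReal hk a y i = ρ * y i ^ (k - 1)) {f : Fin k → Fin n} (hf : a f ≠ 0) :
    0 < ρ := by
  have hterm : 0 < a f * ∏ t ∈ univ.erase ⟨0, hk⟩, y (f t) :=
    mul_pos ((ha f).lt_of_ne' hf) (prod_pos fun t _ => hy _)
  have hle : a f * ∏ t ∈ univ.erase ⟨0, hk⟩, y (f t) ≤ ρ * y (f ⟨0, hk⟩) ^ (k - 1) := by
    rw [← hρ, tApplyReal]
    exact single_le_sum (f := fun j => a j * ∏ t ∈ univ.erase ⟨0, hk⟩, y (j t))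
      (fun j _ => mul_nonneg (ha j) (prod_nonneg fun t _ => (hy _).le)) (by simp)
  exact pos_of_mul_pos_left (hterm.trans_le hle) (pow_pos (hy _) _).le

theorem nonneg_of_eigenvector (ha : ∀ j, 0 ≤ a j) (hy : ∀ i, 0 < y i)
    (hρ : ∀ i, tApplyReal hk a y i = ρ * y i ^ (k - 1)) (i : Fin n) : 0 ≤ ρ := by
  refine nonneg_of_mul_nonneg_left ?_ (pow_pos (hy i) (k - 1))
  rw [← hρ]
  exact sum_nonneg fun j _ => mul_nonneg (ha j) (prod_nonneg fun t _ => (hy _).le)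

theorem exists_eq_smul_of_le_tApplyReal (ha : ∀ j, 0 ≤ a j)
    (hwi : WeaklyIrreducible hk (fun j => (a j : ℂ))) (hy : ∀ i, 0 < y i)
    (hρ : ∀ i, tApplyReal hk a y i = ρ * y i ^ (k - 1)) {u : Fin n → ℝ} (hu : ∀ i, 0 ≤ u i)
    (hu0 : u ≠ 0) (hsub : ∀ i, ρ * u i ^ (k - 1) ≤ tApplyReal hk a u i) :
    ∃ s : ℝ, 0 < s ∧ u = s • y := by
  obtain ⟨i₀, hi₀⟩ := Function.ne_iff.mp hu0
  suffices hconst : ∀ i j, u i / y i = u j / y j by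
    refine ⟨u i₀ / y i₀, div_pos ((hu i₀).lt_of_ne' hi₀) (hy i₀), funext fun i => ?_⟩
    rw [Pi.smul_apply, smul_eq_mul, ← hconst i, div_mul_cancel₀ _ (hy i).ne']
  refine hwi.eq_of_max_propagates (fun i => u i / y i) fun f hf hmax t ht => ?_
  set i := f ⟨0, hk⟩
  set s := u i / y i
  have hle : ∀ l, u l ≤ s * y l := fun l => (div_le_iff₀ (hy l)).mp (hmax l)
  have hs : 0 < s := by
    refine lt_of_le_of_ne (div_nonneg (hu i) (hy i).le) fun hs0 => hi₀ ?_
    exact le_antisymm (by simpa [← hs0] using hle i₀) (hu i₀)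
  have hui : u i = s * y i := (div_mul_cancel₀ _ (hy i).ne').symm
  have hterm_le : ∀ j ∈ univ.filter (fun j : Fin k → Fin n => j ⟨0, hk⟩ = i),
      a j * ∏ t ∈ univ.erase ⟨0, hk⟩, u (j t) ≤ a j * ∏ t ∈ univ.erase ⟨0, hk⟩, (s • y) (j t) :=
    fun j _ => mul_le_mul_of_nonneg_left
      (prod_le_prod (fun _ _ => hu _) fun _ _ => hle _) (ha j)
  have hsum : tApplyReal hk a u i = tApplyReal hk a (s • y) i := by
    refine le_antisymm (sum_le_sum hterm_le) ?_
    rw [tApplyReal_smul, hρ, ← mul_assoc, mul_comm (s ^ _), mul_assoc, ← mul_pow, ← hui]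
    exact hsub i
  have hprod : ∏ t ∈ univ.erase ⟨0, hk⟩, u (f t) = ∏ t ∈ univ.erase ⟨0, hk⟩, s * y (f t) :=
    mul_left_cancel₀ (by exact_mod_cast hf)
      ((sum_eq_sum_iff_of_le hterm_le).mp hsum f (by simp [i]))
  rw [eq_of_prod_eq_of_le (fun _ _ => hu _) (fun _ _ => hle _) (fun _ _ => mul_pos hs (hy _))
    hprod (mem_erase.mpr ⟨ht, mem_univ t⟩), mul_div_cancel_right₀ _ (hy _).ne']

end Real

section Modulus

variable {k n : ℕ} {hk : 0 < k} {a : (Fin k → Fin n) → ℝ} {ρ : ℝ} {y : Fin n → ℝ} {μ : ℂ}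
  {x : Fin n → ℂ}

theorem exists_norm_eq_smul_of_eigenvector (ha : ∀ j, 0 ≤ a j)
    (hwi : WeaklyIrreducible hk (fun j => (a j : ℂ))) (hy : ∀ i, 0 < y i)
    (hρ : ∀ i, tApplyReal hk a y i = ρ * y i ^ (k - 1)) (hμ : ‖μ‖ = ρ) (hx0 : x ≠ 0)
    (hx : ∀ i, tApply hk (fun j => (a j : ℂ)) x i = μ * x i ^ (k - 1)) :
    ∃ s : ℝ, 0 < s ∧ (‖x ·‖) = s • y := by
  refine exists_eq_smul_of_le_tApplyReal ha hwi hy hρ (fun i => norm_nonneg _) ?_ fun i => ?_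
  · obtain ⟨i, hi⟩ := Function.ne_iff.mp hx0
    exact Function.ne_iff.mpr ⟨i, by simpa using hi⟩
  · calc ρ * ‖x i‖ ^ (k - 1) = ‖tApply hk (fun j => (a j : ℂ)) x i‖ := by
          rw [hx, norm_mul, norm_pow, hμ]
      _ ≤ tApplyReal hk a (‖x ·‖) i := norm_tApply_le ha x i

/-- Equality in the triangle inequality `|𝒜 x^{k-1}| ≤ 𝒜 |x|^{k-1}` forces all terms of a row
to have the same phase. -/
theorem isPhase_div_of_norm_eq (ha : ∀ j, 0 ≤ a j) (hy : ∀ i, 0 < y i)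
    (hρ : ∀ i, tApplyReal hk a y i = ρ * y i ^ (k - 1)) (hμ : ‖μ‖ = ρ)
    (hx : ∀ i, tApply hk (fun j => (a j : ℂ)) x i = μ * x i ^ (k - 1))
    (hxy : ∀ i, ‖x i‖ = y i) {c : ℂ} (hc : c * ρ = μ) :
    IsPhase hk (fun j => (a j : ℂ)) c (fun i => x i / y i) := by
  intro f hf
  have hf : a f ≠ 0 := fun h => hf (by simp [h])
  have hy0 : ∀ i, (y i : ℂ) ≠ 0 := fun i => by exact_mod_cast (hy i).ne'
  set i := f ⟨0, hk⟩
  have hρpos := pos_of_ne_zero_of_eigenvector ha hy hρ hf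
  have hρ0 : (ρ : ℂ) ≠ 0 := by exact_mod_cast hρpos.ne'
  have hpos : 0 < ρ * y i ^ (k - 1) := mul_pos hρpos (pow_pos (hy i) _)
  set w := μ * x i ^ (k - 1) / (ρ * y i ^ (k - 1) : ℝ)
  have hnorm_term : ∀ j, ‖(a j : ℂ) * ∏ t ∈ univ.erase ⟨0, hk⟩, x (j t)‖ =
      a j * ∏ t ∈ univ.erase ⟨0, hk⟩, y (j t) := fun j => by
    simp only [norm_mul, norm_prod, hxy, Complex.norm_real, Real.norm_of_nonneg (ha j)]
  have hw : ‖w‖ = 1 := by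
    rw [norm_div, norm_mul, norm_pow, hμ, hxy, Complex.norm_real, Real.norm_of_nonneg hpos.le,
      div_self hpos.ne']
  have hterm := Complex.eq_norm_mul_of_sum_eq (s := univ.filter (· ⟨0, hk⟩ = i)) hw
    (by rw [← tApply_eq_sum_filter, hx, sum_congr rfl fun j _ => hnorm_term j, ← tApplyReal,
      hρ, mul_div_cancel₀ _ (by exact_mod_cast hpos.ne')]) (j := f) (by simp [i])
  rw [hnorm_term] at hterm
  have hprod : ∏ t ∈ univ.erase ⟨0, hk⟩, x (f t) = (∏ t ∈ univ.erase ⟨0, hk⟩, (y (f t) : ℂ)) * w :=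
    mul_left_cancel₀ (by exact_mod_cast hf : (a f : ℂ) ≠ 0) (hterm.trans (by push_cast; ring))
  have hw_eq : w = c * (x i / y i) ^ (k - 1) := by
    simp only [w, ← hc]
    push_cast
    field_simp
    ring
  rw [prod_div_distrib, hprod, mul_div_cancel_left₀ _ (prod_ne_zero_iff.mpr fun t _ => hy0 _),
    hw_eq]

theorem exists_isPhase_eq_smul_mul (ha : ∀ j, 0 ≤ a j)
    (hwi : WeaklyIrreducible hk (fun j => (a j : ℂ))) (hy : ∀ i, 0 < y i)
    (hρ : ∀ i, tApplyReal hk a y i = ρ * y i ^ (k - 1)) (hμ : ‖μ‖ = ρ) (hx0 : x ≠ 0)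
    (hx : ∀ i, tApply hk (fun j => (a j : ℂ)) x i = μ * x i ^ (k - 1)) {c : ℂ}
    (hc : c * ρ = μ) :
    ∃ s : ℝ, 0 < s ∧ ∃ d : Fin n → ℂ, (∀ i, ‖d i‖ = 1) ∧ IsPhase hk (fun j => (a j : ℂ)) c d ∧
      x = (s : ℂ) • (d * fun i => (y i : ℂ)) := by
  obtain ⟨s, hs, hxs⟩ := exists_norm_eq_smul_of_eigenvector ha hwi hy hρ hμ hx0 hx
  have hsy : ∀ i, 0 < (s • y) i := fun i => mul_pos hs (hy i)
  have hnorm : ∀ i, ‖x i‖ = (s • y) i := congrFun hxs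
  refine ⟨s, hs, fun i => x i / ((s • y) i : ℝ), fun i => ?_, ?_, funext fun i => ?_⟩
  · rw [norm_div, hnorm, Complex.norm_real, Real.norm_of_nonneg (hsy i).le, div_self (hsy i).ne']
  · refine isPhase_div_of_norm_eq ha hsy (fun i => ?_) hμ hx hnorm hc
    rw [tApplyReal_smul, hρ, Pi.smul_apply, smul_eq_mul, mul_pow]
    ring
  · have : ((s • y) i : ℂ) ≠ 0 := by exact_mod_cast (hsy i).ne'
    simp only [Pi.smul_apply, Pi.mul_apply, smul_eq_mul] at this ⊢
    push_cast at this ⊢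
    rw [mul_left_comm, div_mul_cancel₀ _ this]

end Modulus

section Winding

open Complex Real

variable {k n : ℕ} (hk : 0 < k)

/-- The argument of `∏_{t ≠ 0} z_{f t} / z_{f 0}^{k-1}` computed from the principal
arguments of the factors, hence without reduction modulo `2π`. -/
noncomputable def winding (z : Fin n → ℂ) (f : Fin k → Fin n) : ℝ :=
  ∑ t ∈ univ.erase ⟨0, hk⟩, arg (z (f t)) - (k - 1 : ℕ) * arg (z (f ⟨0, hk⟩))

def normalizedPhases (b : (Fin k → Fin n) → ℂ) (i₀ : Fin n) : Set (Fin n → ℂ) :=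
  {z | z i₀ = 1 ∧ (∀ i, ‖z i‖ = 1) ∧ IsPhase hk b 1 z}

variable {hk}

theorem abs_winding_le (z : Fin n → ℂ) (f : Fin k → Fin n) :
    |winding hk z f| ≤ 2 * (k - 1 : ℕ) * π := by
  have hsum : |∑ t ∈ univ.erase (⟨0, hk⟩ : Fin k), arg (z (f t))| ≤ (k - 1 : ℕ) * π :=
    calc |∑ t ∈ univ.erase (⟨0, hk⟩ : Fin k), arg (z (f t))|
        ≤ ∑ t ∈ univ.erase ⟨0, hk⟩, |arg (z (f t))| := abs_sum_le_sum_abs _ _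
      _ ≤ ∑ _t ∈ univ.erase (⟨0, hk⟩ : Fin k), π := sum_le_sum fun _ _ => abs_arg_le_pi _
      _ = (k - 1 : ℕ) * π := by rw [sum_const, card_erase_zero, nsmul_eq_mul]
  have hlast : |(k - 1 : ℕ) * arg (z (f ⟨0, hk⟩))| ≤ (k - 1 : ℕ) * π := by
    rw [abs_mul, Nat.abs_cast]
    exact mul_le_mul_of_nonneg_left (abs_arg_le_pi _) (Nat.cast_nonneg _)
  calc |winding hk z f| ≤ _ + _ := abs_sub _ _
    _ ≤ 2 * (k - 1 : ℕ) * π := by linarith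

theorem exp_arg_mul_I_of_norm_eq_one {w : ℂ} (hw : ‖w‖ = 1) : exp (arg w * I) = w := by
  simpa [hw] using norm_mul_exp_arg_mul_I w

theorem exp_winding_mul_I {z : Fin n → ℂ} (hz : ∀ i, ‖z i‖ = 1) (f : Fin k → Fin n) :
    exp (winding hk z f * I) * z (f ⟨0, hk⟩) ^ (k - 1) = ∏ t ∈ univ.erase ⟨0, hk⟩, z (f t) := by
  have hz0 : z (f ⟨0, hk⟩) ^ (k - 1) ≠ 0 :=
    pow_ne_zero _ (Complex.ne_zero_of_norm_eq_one (hz _))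
  rw [winding, ofReal_sub, sub_mul, Complex.exp_sub, ofReal_sum, sum_mul, Complex.exp_sum,
    ofReal_mul, ofReal_natCast, mul_assoc, Complex.exp_nat_mul, exp_arg_mul_I_of_norm_eq_one (hz _),
    div_mul_cancel₀ _ hz0]
  exact prod_congr rfl fun t _ => exp_arg_mul_I_of_norm_eq_one (hz _)

variable {b : (Fin k → Fin n) → ℂ} {i₀ : Fin n}

theorem exists_winding_eq_two_pi_mul {z : Fin n → ℂ} (hz : z ∈ normalizedPhases hk b i₀)
    {f : Fin k → Fin n} (hf : b f ≠ 0) : ∃ m : ℤ, winding hk z f = 2 * π * m := by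
  have hz0 : z (f ⟨0, hk⟩) ^ (k - 1) ≠ 0 :=
    pow_ne_zero _ (Complex.ne_zero_of_norm_eq_one (hz.2.1 _))
  have hexp : exp (winding hk z f * I) = 1 := by
    have := exp_winding_mul_I (hk := hk) hz.2.1 f
    rwa [hz.2.2 f hf, one_mul, mul_eq_right₀ hz0] at this
  obtain ⟨m, hm⟩ := exp_eq_one_iff.mp hexp
  refine ⟨m, ?_⟩
  have := congrArg im hm
  simp only [mul_im, mul_re, ofReal_re, I_im, ofReal_im, I_re, mul_zero, mul_one, add_zero,
    intCast_re, intCast_im, re_ofNat, im_ofNat, zero_mul, sub_zero] at this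
  linarith

theorem eq_of_winding_eq (hwi : WeaklyIrreducible hk b) {z z' : Fin n → ℂ}
    (hz : z ∈ normalizedPhases hk b i₀) (hz' : z' ∈ normalizedPhases hk b i₀)
    (h : ∀ f, b f ≠ 0 → winding hk z f = winding hk z' f) : z = z' := by
  have hconst : ∀ i j, arg (z i) - arg (z' i) = arg (z j) - arg (z' j) := by
    refine hwi.eq_of_max_propagates (fun i => arg (z i) - arg (z' i)) fun f hf hmax t ht => ?_
    have hsum : ∑ t ∈ univ.erase (⟨0, hk⟩ : Fin k), (arg (z (f t)) - arg (z' (f t))) =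
        ∑ _t ∈ univ.erase (⟨0, hk⟩ : Fin k), (arg (z (f ⟨0, hk⟩)) - arg (z' (f ⟨0, hk⟩))) := by
      have := h f hf
      simp only [winding] at this
      rw [sum_sub_distrib, sum_const, card_erase_zero, nsmul_eq_mul]
      linarith
    exact (sum_eq_sum_iff_of_le fun t _ => hmax (f t)).mp hsum t (mem_erase.mpr ⟨ht, mem_univ t⟩)
  funext i
  refine ext_norm_arg (by rw [hz.2.1, hz'.2.1]) ?_
  have := hconst i i₀
  rwa [hz.1, hz'.1, sub_self, sub_eq_zero] at this

theorem normalizedPhases_finite (hwi : WeaklyIrreducible hk b) (i₀ : Fin n) :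
    (normalizedPhases hk b i₀).Finite := by
  have hπ := pi_pos
  set F : (Fin n → ℂ) → (Fin k → Fin n) → ℤ := fun z f => ⌊winding hk z f / (2 * π)⌋
  have hF : ∀ z ∈ normalizedPhases hk b i₀, ∀ f, b f ≠ 0 → winding hk z f = 2 * π * F z f := by
    intro z hz f hf
    obtain ⟨m, hm⟩ := exists_winding_eq_two_pi_mul hz hf
    simp only [F, hm, mul_div_cancel_left₀ _ (by positivity : 2 * π ≠ 0), Int.floor_intCast]
  have hinj : Set.InjOn F (normalizedPhases hk b i₀) := fun z hz z' hz' hzz' =>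
    eq_of_winding_eq hwi hz hz' fun f hf => by rw [hF z hz f hf, hF z' hz' f hf, congrFun hzz' f]
  refine Set.Finite.of_finite_image (Set.Finite.subset (Set.Finite.pi fun _ =>
    (Finset.Icc (-(k : ℤ)) k).finite_toSet) ?_) hinj
  rintro _ ⟨z, -, rfl⟩ f -
  have hk1 : ((k - 1 : ℕ) : ℝ) ≤ k := by exact_mod_cast Nat.sub_le k 1
  have hbound := abs_le.mp ((abs_winding_le (hk := hk) z f).trans
    (mul_le_mul_of_nonneg_right (mul_le_mul_of_nonneg_left hk1 zero_le_two) hπ.le))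
  have hlo : (-(k : ℤ) : ℝ) ≤ winding hk z f / (2 * π) := by
    rw [le_div_iff₀ (by positivity)]; push_cast; linarith
  have hhi : winding hk z f / (2 * π) ≤ (k : ℤ) := by
    rw [div_le_iff₀ (by positivity)]; push_cast; linarith
  exact Finset.mem_coe.mpr (Finset.mem_Icc.mpr
    ⟨Int.le_floor.mpr (by exact_mod_cast hlo), Int.cast_le.mp ((Int.floor_le _).trans hhi)⟩)

end Winding

theorem finite_projEigenvariety_of_pos_eigenvector {k n : ℕ} {hk : 0 < k}
    {a : (Fin k → Fin n) → ℝ} {ρ : ℝ} {y : Fin n → ℝ} (ha : ∀ j, 0 ≤ a j)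
    (hwi : WeaklyIrreducible hk (fun j => (a j : ℂ))) (hy : ∀ i, 0 < y i)
    (hρ : ∀ i, tApplyReal hk a y i = ρ * y i ^ (k - 1)) (i₀ : Fin n) :
    Finite (ProjEigenvariety hk (fun j => (a j : ℂ)) ρ) := by
  let Y : TensorEigenvectors hk (fun j => (a j : ℂ)) ρ :=
    ⟨fun i => (y i : ℂ), fun h => (hy i₀).ne' (Complex.ofReal_eq_zero.mp (congrFun h i₀)),
      fun i => by rw [tApply_ofReal, hρ]; push_cast; rfl⟩
  let toProj (z : normalizedPhases hk (fun j => (a j : ℂ)) i₀) :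
      ProjEigenvariety hk (fun j => (a j : ℂ)) ρ :=
    Quot.mk _ ⟨z.1 * Y.1, by
      simpa using z.2.2.2.isEigenvector_mul (fun i => Complex.ne_zero_of_norm_eq_one (z.2.2.1 i))
        Y⟩
  have := (normalizedPhases_finite hwi i₀).to_subtype
  refine Finite.of_surjective toProj (Quot.ind fun x => ?_)
  have hρnorm : ‖(ρ : ℂ)‖ = ρ := by
    rw [Complex.norm_real, Real.norm_of_nonneg (nonneg_of_eigenvector ha hy hρ i₀)]
  obtain ⟨s, hs, d, hd1, hd, hx⟩ := exists_isPhase_eq_smul_mul ha hwi hy hρ hρnorm x.2.1 x.2.2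
    (one_mul _)
  have hd0 : d i₀ ≠ 0 := Complex.ne_zero_of_norm_eq_one (hd1 i₀)
  refine ⟨⟨(d i₀)⁻¹ • d, by simp [hd0], fun i => by simp [hd1], hd.smul _⟩, Quot.sound
    ⟨s * d i₀, mul_ne_zero (by exact_mod_cast hs.ne') hd0, ?_⟩⟩
  rw [hx]
  funext i
  simp only [Pi.smul_apply, Pi.mul_apply, smul_eq_mul, Y]
  field_simp

/-- for a nonnegative weakly irreducible tensor `𝒜` with Perron–Frobenius
eigenvalue `ρ` and any eigenvalue `λ` of `𝒜` with `|λ| = ρ`, the projective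
eigenvarieties `𝕍_λ(𝒜)` and `𝕍_ρ(𝒜)` (eigenvectors up to nonzero complex scalars) are
finite and have the same cardinality. -/
theorem stmt12 (k n : ℕ) (hk : 2 ≤ k) (a : (Fin k → Fin n) → ℝ)
    (ha : ∀ j, 0 ≤ a j)
    (hwi : WeaklyIrreducible (by omega : 0 < k) (fun j => (a j : ℂ)))
    (ρ : ℝ) (y : Fin n → ℝ) (hy : ∀ i, 0 < y i)
    (hρ : ∀ i, tApply (by omega : 0 < k) (fun j => (a j : ℂ)) (fun i => (y i : ℂ)) i =
      (ρ : ℂ) * (y i : ℂ) ^ (k - 1))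
    (lam : ℂ) (hlam : ‖lam‖ = ρ)
    (hev : ∃ x : Fin n → ℂ, x ≠ 0 ∧
      ∀ i, tApply (by omega : 0 < k) (fun j => (a j : ℂ)) x i = lam * x i ^ (k - 1)) :
    Finite (Quot (fun
        (x z : {x : Fin n → ℂ // x ≠ 0 ∧
          ∀ i, tApply (by omega : 0 < k) (fun j => (a j : ℂ)) x i = lam * x i ^ (k - 1)}) =>
      ∃ c : ℂ, c ≠ 0 ∧ z.1 = c • x.1)) ∧
    Finite (Quot (fun
        (x z : {x : Fin n → ℂ // x ≠ 0 ∧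
          ∀ i, tApply (by omega : 0 < k) (fun j => (a j : ℂ)) x i =
            (ρ : ℂ) * x i ^ (k - 1)}) =>
      ∃ c : ℂ, c ≠ 0 ∧ z.1 = c • x.1)) ∧
    Nat.card (Quot (fun
        (x z : {x : Fin n → ℂ // x ≠ 0 ∧
          ∀ i, tApply (by omega : 0 < k) (fun j => (a j : ℂ)) x i = lam * x i ^ (k - 1)}) =>
      ∃ c : ℂ, c ≠ 0 ∧ z.1 = c • x.1)) =
    Nat.card (Quot (fun
        (x z : {x : Fin n → ℂ // x ≠ 0 ∧
          ∀ i, tApply (by omega : 0 < k) (fun j => (a j : ℂ)) x i =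
            (ρ : ℂ) * x i ^ (k - 1)}) =>
      ∃ c : ℂ, c ≠ 0 ∧ z.1 = c • x.1)) := by
  obtain ⟨x, hx0, hx⟩ := hev
  obtain ⟨i₀, -⟩ := Function.ne_iff.mp hx0
  have hρ : ∀ i, tApplyReal (by omega) a y i = ρ * y i ^ (k - 1) := fun i => by
    exact_mod_cast (tApply_ofReal y i).symm.trans (hρ i)
  obtain ⟨-, -, d, hd1, hd, -⟩ := exists_isPhase_eq_smul_mul ha hwi hy hρ hlam hx0 hx
    (Complex.div_ofReal_mul_of_norm_eq hlam)
  have e : ProjEigenvariety (by omega) (fun j => (a j : ℂ)) ρ ≃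
      ProjEigenvariety (by omega) (fun j => (a j : ℂ)) lam :=
    ProjEigenvariety.equivOfIsPhase hd (fun i => Complex.ne_zero_of_norm_eq_one (hd1 i))
      (Complex.div_ofReal_mul_of_norm_eq hlam).symm
      (Complex.inv_div_ofReal_mul_of_norm_eq hlam).symm
  have := finite_projEigenvariety_of_pos_eigenvector ha hwi hy hρ i₀
  exact ⟨Finite.of_equiv _ e, this, Nat.card_congr e.symm⟩
end

section
/- Let H be a connected k-uniform hypergraph (k ≥ 2) on n ≥ 2 vertices with at least one edge, and let ρ be the unique eigenvalue of the signless Laplacian tensor 𝒬(H) admitting a strictly positive eigenvector. Then ρ is the unique eigenvalue of 𝒬(H) of maximum modulus: every eigenvalue λ of 𝒬(H) with |λ| = ρ satisfies λ = ρ. -/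
open Finset

/-- The degree of a vertex `v`: the number of edges containing `v`. -/
def hDeg {n : ℕ} (E : Finset (Finset (Fin n))) (v : Fin n) : ℕ :=
  (E.filter (fun e => v ∈ e)).card

/-- The action `(𝒬(H) x^{k-1})_v = d_v x_v^{k-1} + (𝒜(H) x^{k-1})_v` of the signless
Laplacian tensor. -/
noncomputable def qApply {n : ℕ} (k : ℕ) (E : Finset (Finset (Fin n))) (x : Fin n → ℂ)
    (v : Fin n) : ℂ :=
  (hDeg E v : ℂ) * x v ^ (k - 1) + adjApply E x v

/-- A hypergraph is connected if any two vertices are joined by a sequence of vertices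
in which consecutive vertices lie in a common edge. -/
def HConnected {n : ℕ} (E : Finset (Finset (Fin n))) : Prop :=
  ∀ u v : Fin n, Relation.ReflTransGen (fun a b => ∃ e ∈ E, a ∈ e ∧ b ∈ e) u v

/- At a vertex `v` maximising `|x_v| / y_v`, the eigen-equations for `x` and `y` give
`|λ - d_v| ≤ ρ - d_v`, a Gershgorin-type disc centred at `d_v > 0` that touches the
circle `|z| = ρ` only at `ρ`. If `d_v = 0` instead, the equation for `y` at `v` forces
`ρ = 0`. -/

lemma Finset.norm_prod_le_pow_card_mul_prod {ι R : Type*} [NormedCommRing R] [NormOneClass R]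
    (s : Finset ι) {x : ι → R} {y : ι → ℝ} {t : ℝ} (h : ∀ i ∈ s, ‖x i‖ ≤ t * y i) :
    ‖∏ i ∈ s, x i‖ ≤ t ^ s.card * ∏ i ∈ s, y i :=
  calc ‖∏ i ∈ s, x i‖ ≤ ∏ i ∈ s, ‖x i‖ := s.norm_prod_le x
    _ ≤ ∏ i ∈ s, t * y i := Finset.prod_le_prod (fun i _ => norm_nonneg _) h
    _ = t ^ s.card * ∏ i ∈ s, y i := by rw [Finset.prod_mul_distrib, Finset.prod_const]

lemma Complex.eq_norm_of_norm_sub_ofReal_le {z : ℂ} {d : ℝ} (hd : 0 < d)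
    (h : ‖z - d‖ ≤ ‖z‖ - d) : z = ‖z‖ := by
  have hsq : ‖z - d‖ ^ 2 = ‖z‖ ^ 2 - 2 * d * z.re + d ^ 2 := by
    simp only [Complex.sq_norm, Complex.normSq_apply, Complex.sub_re, Complex.sub_im,
      Complex.ofReal_re, Complex.ofReal_im]
    ring
  have hre : ‖z‖ ≤ z.re := by nlinarith [norm_nonneg (z - d)]
  have hre_eq : z.re = ‖z‖ := le_antisymm (Complex.re_le_norm z) hre
  have him : z.im = 0 := Complex.abs_re_eq_norm.1 (by rw [hre_eq, abs_norm])
  exact Complex.ext (by simpa using hre_eq) (by simpa using him)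

section Hypergraph

variable {n k : ℕ} {E : Finset (Finset (Fin n))}

lemma adjApply_ofReal (y : Fin n → ℝ) (v : Fin n) :
    adjApply E (fun i => (y i : ℂ)) v
      = ((∑ e ∈ E.filter (fun e => v ∈ e), ∏ u ∈ e.erase v, y u : ℝ) : ℂ) := by
  simp [adjApply]

lemma norm_adjApply_le (hunif : ∀ e ∈ E, e.card = k) {x : Fin n → ℂ} {y : Fin n → ℝ}
    {t : ℝ} (hxy : ∀ u, ‖x u‖ ≤ t * y u) (v : Fin n) :
    ‖adjApply E x v‖ ≤ t ^ (k - 1) * ∑ e ∈ E.filter (fun e => v ∈ e), ∏ u ∈ e.erase v, y u := by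
  rw [adjApply, Finset.mul_sum]
  refine (norm_sum_le _ _).trans (Finset.sum_le_sum fun e he => ?_)
  obtain ⟨heE, hve⟩ := Finset.mem_filter.1 he
  have hcard : (e.erase v).card = k - 1 := by rw [Finset.card_erase_of_mem hve, hunif e heE]
  simpa only [hcard] using (e.erase v).norm_prod_le_pow_card_mul_prod fun u _ => hxy u

lemma norm_sub_hDeg_le (hunif : ∀ e ∈ E, e.card = k) {x : Fin n → ℂ} {y : Fin n → ℝ}
    (hy : ∀ i, 0 < y i) {ρ : ℝ} {lam : ℂ} {v : Fin n}
    (hyv : qApply k E (fun i => (y i : ℂ)) v = (ρ : ℂ) * (y v : ℂ) ^ (k - 1))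
    (hxv : qApply k E x v = lam * x v ^ (k - 1)) (hxv0 : x v ≠ 0)
    (hmax : ∀ u, ‖x u‖ / y u ≤ ‖x v‖ / y v) :
    ‖lam - hDeg E v‖ ≤ ρ - hDeg E v := by
  set t := ‖x v‖ / y v
  set A := ∑ e ∈ E.filter (fun e => v ∈ e), ∏ u ∈ e.erase v, y u
  have hxy : ∀ u, ‖x u‖ ≤ t * y u := fun u => (div_le_iff₀ (hy u)).1 (hmax u)
  have hyv' : (hDeg E v : ℝ) * y v ^ (k - 1) + A = ρ * y v ^ (k - 1) := by
    rw [qApply, adjApply_ofReal] at hyv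
    exact_mod_cast hyv
  have hxv' : (lam - hDeg E v) * x v ^ (k - 1) = adjApply E x v := by
    rw [qApply] at hxv
    linear_combination -hxv
  have hnorm_xv : ‖x v ^ (k - 1)‖ = t ^ (k - 1) * y v ^ (k - 1) := by
    rw [norm_pow, ← mul_pow, div_mul_cancel₀ _ (hy v).ne']
  have hpos : 0 < t ^ (k - 1) * y v ^ (k - 1) := by
    rw [← hnorm_xv]
    exact norm_pos_iff.2 (pow_ne_zero _ hxv0)
  refine le_of_mul_le_mul_right ?_ hpos
  calc ‖lam - hDeg E v‖ * (t ^ (k - 1) * y v ^ (k - 1))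
      = ‖adjApply E x v‖ := by rw [← hxv', norm_mul, hnorm_xv]
    _ ≤ t ^ (k - 1) * A := norm_adjApply_le hunif hxy v
    _ = (ρ - hDeg E v) * (t ^ (k - 1) * y v ^ (k - 1)) := by
      linear_combination t ^ (k - 1) * hyv'

lemma eigenvalue_eq_zero_of_hDeg_eq_zero {y : Fin n → ℝ} {ρ : ℝ} {v : Fin n} (hyv0 : y v ≠ 0)
    (hyv : qApply k E (fun i => (y i : ℂ)) v = (ρ : ℂ) * (y v : ℂ) ^ (k - 1))
    (hdeg : hDeg E v = 0) : ρ = 0 := by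
  have hempty : E.filter (fun e => v ∈ e) = ∅ := Finset.card_eq_zero.1 hdeg
  rw [qApply, adjApply, hempty, hdeg] at hyv
  simpa [hyv0] using hyv

end Hypergraph

theorem stmt16_general (k n : ℕ)
    (E : Finset (Finset (Fin n))) (hunif : ∀ e ∈ E, e.card = k)
    (ρ : ℝ) (y : Fin n → ℝ) (hy : ∀ i, 0 < y i)
    (hρ : ∀ v, qApply k E (fun i => (y i : ℂ)) v = (ρ : ℂ) * (y v : ℂ) ^ (k - 1))
    (lam : ℂ) (hlam : ‖lam‖ = ρ)
    (hev : ∃ x : Fin n → ℂ, x ≠ 0 ∧ ∀ v, qApply k E x v = lam * x v ^ (k - 1)) :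
    lam = (ρ : ℂ) := by
  obtain ⟨x, hx0, hx⟩ := hev
  obtain ⟨w, hw⟩ := Function.ne_iff.1 hx0
  have : Nonempty (Fin n) := ⟨w⟩
  obtain ⟨v, hmax⟩ := Finite.exists_max fun u => ‖x u‖ / y u
  have hxv0 : x v ≠ 0 := by
    intro hxv
    have := hmax w
    rw [hxv, norm_zero, zero_div] at this
    exact this.not_gt (div_pos (norm_pos_iff.2 hw) (hy w))
  rcases Nat.eq_zero_or_pos (hDeg E v) with hdeg | hdeg
  · rw [eigenvalue_eq_zero_of_hDeg_eq_zero (hy v).ne' (hρ v) hdeg] at hlam ⊢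
    simpa using hlam
  · have hdisc := norm_sub_hDeg_le hunif hy (hρ v) (hx v) hxv0 hmax
    rw [← Complex.ofReal_natCast, ← hlam] at hdisc
    rw [← hlam]
    exact Complex.eq_norm_of_norm_sub_ofReal_le (Nat.cast_pos.2 hdeg) hdisc

/-- for a connected `k`-uniform hypergraph `H` with Perron–Frobenius
eigenvalue `ρ` of the signless Laplacian tensor `𝒬(H)`, every eigenvalue `λ` of `𝒬(H)`
with `|λ| = ρ` satisfies `λ = ρ`. -/
theorem stmt16 (k n : ℕ) (hk : 2 ≤ k) (hn : 2 ≤ n)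
    (E : Finset (Finset (Fin n))) (hunif : ∀ e ∈ E, e.card = k) (hne : E.Nonempty)
    (hconn : HConnected E)
    (ρ : ℝ) (y : Fin n → ℝ) (hy : ∀ i, 0 < y i)
    (hρ : ∀ v, qApply k E (fun i => (y i : ℂ)) v = (ρ : ℂ) * (y v : ℂ) ^ (k - 1))
    (lam : ℂ) (hlam : ‖lam‖ = ρ)
    (hev : ∃ x : Fin n → ℂ, x ≠ 0 ∧ ∀ v, qApply k E x v = lam * x v ^ (k - 1)) :
    lam = (ρ : ℂ) :=
  stmt16_general k n E hunif ρ y hy hρ lam hlam hev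
end
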